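/- arXiv:1112.0988 — 3 statements merged into one kernel-verified Lean document; each statement's English description precedes it below -/
import Mathlib

section
/- Let A be an invertible 2×2 complex matrix and x a vector in ℂ² with ‖x‖ = 1. Then max(‖Ax‖, ‖A²x‖, ‖A⁻¹x‖, ‖A⁻²x‖) ≥ 1/2. -/
theorem four_block_arith {T D a b c e : ℝ} (hT0 : 0 ≤ T) (hD0 : 0 ≤ D)
    (ha0 : 0 ≤ a) (hc0 : 0 ≤ c) (he0 : 0 ≤ e)
    (n1 : D ≤ T * a + b) (n2 : 1 ≤ T * c + D * e) (n3 : T ≤ a + D * c)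
    (haM : a < 1/2) (hbM : b < 1/2) (hcM : c < 1/2) (heM : e < 1/2) : False := by
  have h1 : D * c ≤ (T * a + b) * c := mul_le_mul_of_nonneg_right n1 hc0
  have hT1 : T < 1 := by nlinarith
  have hD1 : D < 1 := by nlinarith
  nlinarith

/-- "Four block" lemma: for an invertible 2×2 complex matrix `A` and a unit vector
`x ∈ ℂ²`, `max(‖Ax‖, ‖A²x‖, ‖A⁻¹x‖, ‖A⁻²x‖) ≥ 1/2`. -/
theorem four_block_lemma (A : Matrix (Fin 2) (Fin 2) ℂ) (hA : IsUnit A)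
    (x : EuclideanSpace ℂ (Fin 2)) (hx : ‖x‖ = 1) :
    (1 : ℝ) / 2 ≤
      max (max ‖Matrix.toEuclideanLin A x‖ ‖Matrix.toEuclideanLin (A * A) x‖)
          (max ‖Matrix.toEuclideanLin A⁻¹ x‖ ‖Matrix.toEuclideanLin (A⁻¹ * A⁻¹) x‖) := by
  set t := A.trace with ht
  set d := A.det with hd
  have hdet : IsUnit d := (Matrix.isUnit_iff_isUnit_det A).mp hA
  have hAi : A * A⁻¹ = 1 := Matrix.mul_nonsing_inv A hdet
  have hiA : A⁻¹ * A = 1 := Matrix.nonsing_inv_mul A hdet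
  -- Cayley–Hamilton for 2×2
  have hCH : A * A = t • A - d • 1 := by
    ext i j
    fin_cases i <;> fin_cases j <;>
      simp [Matrix.mul_apply, Fin.sum_univ_two, Matrix.trace_fin_two, Matrix.det_fin_two,
        Matrix.one_apply, ht, hd] <;> ring
  have hM1 : d • (1 : Matrix (Fin 2) (Fin 2) ℂ) = t • A - A * A := by
    rw [hCH]; abel
  have hM3 : t • (1 : Matrix (Fin 2) (Fin 2) ℂ) = A + d • A⁻¹ := by
    have := congrArg (fun M => M * A⁻¹) hM1
    simp only [Matrix.smul_mul, Matrix.one_mul, Matrix.sub_mul, Matrix.mul_assoc, hAi,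
      Matrix.mul_one] at this
    rw [this]; abel
  have hM2 : (1 : Matrix (Fin 2) (Fin 2) ℂ) = t • A⁻¹ - d • (A⁻¹ * A⁻¹) := by
    have := congrArg (fun M => M * A⁻¹) hM3
    simp only [Matrix.smul_mul, Matrix.one_mul, Matrix.add_mul, hAi] at this
    rw [this]; abel
  -- transfer to vectors
  have hmul : ∀ B C : Matrix (Fin 2) (Fin 2) ℂ, ∀ y : EuclideanSpace ℂ (Fin 2),
      Matrix.toEuclideanLin (B * C) y = Matrix.toEuclideanLin B (Matrix.toEuclideanLin C y) := by
    intro B C y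
    rw [Matrix.toEuclideanLin_eq_toLin, Matrix.toLin_mul _ (PiLp.basisFun 2 ℂ (Fin 2)) _]
    rfl
  have v1 : d • x = t • (Matrix.toEuclideanLin A x) - Matrix.toEuclideanLin (A * A) x := by
    have := congrArg (fun M => Matrix.toEuclideanLin M x) hM1
    simpa [Matrix.toEuclideanLin_eq_toLin] using this
  have v2 : x = t • (Matrix.toEuclideanLin A⁻¹ x)
      - d • (Matrix.toEuclideanLin (A⁻¹ * A⁻¹) x) := by
    have := congrArg (fun M => Matrix.toEuclideanLin M x) hM2
    simpa [Matrix.toEuclideanLin_eq_toLin] using this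
  have v3 : t • x = Matrix.toEuclideanLin A x + d • (Matrix.toEuclideanLin A⁻¹ x) := by
    have := congrArg (fun M => Matrix.toEuclideanLin M x) hM3
    simpa [Matrix.toEuclideanLin_eq_toLin] using this
  set a := ‖Matrix.toEuclideanLin A x‖ with ha
  set b := ‖Matrix.toEuclideanLin (A * A) x‖ with hb
  set c := ‖Matrix.toEuclideanLin A⁻¹ x‖ with hc
  set e := ‖Matrix.toEuclideanLin (A⁻¹ * A⁻¹) x‖ with he
  have n1 : ‖d‖ ≤ ‖t‖ * a + b := by
    calc ‖d‖ = ‖d • x‖ := by rw [norm_smul, hx, mul_one]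
      _ = ‖t • (Matrix.toEuclideanLin A x) - Matrix.toEuclideanLin (A * A) x‖ := by rw [v1]
      _ ≤ ‖t • (Matrix.toEuclideanLin A x)‖ + ‖Matrix.toEuclideanLin (A * A) x‖ :=
          norm_sub_le _ _
      _ = ‖t‖ * a + b := by rw [norm_smul]
  have n2 : 1 ≤ ‖t‖ * c + ‖d‖ * e := by
    calc (1:ℝ) = ‖x‖ := hx.symm
      _ = ‖t • (Matrix.toEuclideanLin A⁻¹ x) - d • (Matrix.toEuclideanLin (A⁻¹ * A⁻¹) x)‖ := by
          rw [← v2]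
      _ ≤ ‖t • (Matrix.toEuclideanLin A⁻¹ x)‖ + ‖d • (Matrix.toEuclideanLin (A⁻¹ * A⁻¹) x)‖ :=
          norm_sub_le _ _
      _ = ‖t‖ * c + ‖d‖ * e := by rw [norm_smul, norm_smul]
  have n3 : ‖t‖ ≤ a + ‖d‖ * c := by
    calc ‖t‖ = ‖t • x‖ := by rw [norm_smul, hx, mul_one]
      _ = ‖Matrix.toEuclideanLin A x + d • (Matrix.toEuclideanLin A⁻¹ x)‖ := by rw [v3]
      _ ≤ ‖Matrix.toEuclideanLin A x‖ + ‖d • (Matrix.toEuclideanLin A⁻¹ x)‖ := norm_add_le _ _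
      _ = a + ‖d‖ * c := by rw [norm_smul]
  by_contra hcon
  push_neg at hcon
  have haM : a < 1/2 := lt_of_le_of_lt (le_trans (le_max_left _ _) (le_max_left _ _)) hcon
  have hbM : b < 1/2 := lt_of_le_of_lt (le_trans (le_max_right _ _) (le_max_left _ _)) hcon
  have hcM : c < 1/2 := lt_of_le_of_lt (le_trans (le_max_left _ _) (le_max_right _ _)) hcon
  have heM : e < 1/2 := lt_of_le_of_lt (le_trans (le_max_right _ _) (le_max_right _ _)) hcon
  have hT0 : (0:ℝ) ≤ ‖t‖ := norm_nonneg _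
  have hD0 : (0:ℝ) ≤ ‖d‖ := norm_nonneg _
  have hc0 : (0:ℝ) ≤ c := norm_nonneg _
  have he0 : (0:ℝ) ≤ e := norm_nonneg _
  have ha0 : (0:ℝ) ≤ a := norm_nonneg _
  exact four_block_arith hT0 hD0 ha0 hc0 he0 n1 n2 n3 haM hbM hcM heM
end

section
/- Let Ω be a Cantor group (totally disconnected compact abelian topological group without isolated points) and T : Ω → Ω a minimal translation. For each f ∈ C(Ω, 𝔻), let Σ(𝓔_f) denote the spectrum of the extended CMV operator with Verblunsky coefficients α_n = f(Tⁿω). Then the set ℛ = {f ∈ C(Ω, 𝔻) : Σ(𝓔_f) has empty interior in ∂𝔻} is a G_δ subset of C(Ω, 𝔻) with the uniform topology. -/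
open scoped InnerProductSpace

/-- `ρₙ = √(1 - |αₙ|²)` for a sequence of Verblunsky coefficients. -/
noncomputable def cmvRho (α : ℤ → ℂ) (n : ℤ) : ℂ :=
  ((Real.sqrt (1 - ‖α n‖ ^ 2) : ℝ) : ℂ)

/-- The `(m,k)` entry of the extended CMV matrix associated with the Verblunsky
coefficients `α : ℤ → 𝔻` (Simon, (10.5.34)-(10.5.35)). -/
noncomputable def cmvEntry (α : ℤ → ℂ) (m k : ℤ) : ℂ :=
  if Even m then
    if k = m - 1 then (starRingEnd ℂ) (α m) * cmvRho α (m - 1)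
    else if k = m then -((starRingEnd ℂ) (α m)) * α (m - 1)
    else if k = m + 1 then (starRingEnd ℂ) (α (m + 1)) * cmvRho α m
    else if k = m + 2 then cmvRho α (m + 1) * cmvRho α m
    else 0
  else
    if k = m - 2 then cmvRho α (m - 1) * cmvRho α (m - 2)
    else if k = m - 1 then -(cmvRho α (m - 1)) * α (m - 2)
    else if k = m then -((starRingEnd ℂ) (α m)) * α (m - 1)
    else if k = m + 1 then -(cmvRho α m) * α (m - 1)
    else 0

/-! The map `f ↦ 𝓔_f` is continuous for the operator norm. The CMV matrix is banded of width 2,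
and each entry is a product of two factors of modulus at most 1 taken among `αₙ`, `conj αₙ` and
`ρₙ = √(1 - |αₙ|²)`, the last depending ½-Hölder on `αₙ`; this gives
`‖𝓔_f - 𝓔_g‖ ≤ 10 (d + √(2d))` with `d = ‖f - g‖`. As `z ∉ Σ(T)` is an open condition on `T`,
`{f | U ⊄ Σ(𝓔_f)}` is open for every open arc `U`, and `ℛ` is the intersection of these sets over a
countable basis of `∂𝔻`. -/

open Filter Topology
open scoped lp

theorem Real.sqrt_add_le (x y : ℝ) (hx : 0 ≤ x) (hy : 0 ≤ y) : √(x + y) ≤ √x + √y := by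
  simp only [Real.sqrt_eq_rpow]
  exact Real.rpow_add_le_add_rpow hx hy (by norm_num) (by norm_num)

theorem Real.abs_sqrt_sub_sqrt_le {x y : ℝ} (hx : 0 ≤ x) (hy : 0 ≤ y) :
    |√x - √y| ≤ √|x - y| := by
  wlog hyx : y ≤ x generalizing x y
  · simpa only [abs_sub_comm] using this hy hx (le_of_not_ge hyx)
  have := Real.sqrt_add_le y (x - y) hy (sub_nonneg.2 hyx)
  rw [add_sub_cancel] at this
  rw [abs_of_nonneg (sub_nonneg.2 hyx), abs_of_nonneg (sub_nonneg.2 (Real.sqrt_le_sqrt hyx))]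
  linarith

theorem norm_mul_sub_mul_le {R : Type*} [SeminormedRing R] {a b c d : R} (ha : ‖a‖ ≤ 1)
    (hd : ‖d‖ ≤ 1) : ‖a * b - c * d‖ ≤ ‖a - c‖ + ‖b - d‖ := calc
  ‖a * b - c * d‖ = ‖a * (b - d) + (a - c) * d‖ := by noncomm_ring
  _ ≤ ‖a‖ * ‖b - d‖ + ‖a - c‖ * ‖d‖ :=
    (norm_add_le _ _).trans (add_le_add (norm_mul_le _ _) (norm_mul_le _ _))
  _ ≤ ‖a - c‖ + ‖b - d‖ := by
    nlinarith [norm_nonneg (b - d), norm_nonneg (a - c)]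

theorem Int.card_Icc_neg_self (w : ℕ) : (Finset.Icc (-(w : ℤ)) w).card = 2 * w + 1 := by
  rw [Int.card_Icc]; omega

theorem isGδ_setOf_interior_eq_empty {X Y : Type*} [TopologicalSpace X] [TopologicalSpace Y]
    [SecondCountableTopology Y] {K : X → Set Y} (hK : ∀ y, IsOpen {x | y ∉ K x}) :
    IsGδ {x | interior (K x) = ∅} := by
  have hb := TopologicalSpace.isBasis_countableBasis Y
  simp_rw [interior_eq_empty_iff_dense_compl, hb.dense_iff, Set.ofPred_forall]
  refine .biInter (TopologicalSpace.countable_countableBasis Y) fun o _ => IsOpen.isGδ ?_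
  by_cases ho : o.Nonempty
  · convert isOpen_biUnion fun y (_ : y ∈ o) => hK y using 1
    ext x
    simp [ho, Set.inter_nonempty]
  · simp [ho]

theorem isOpen_setOf_notMem_spectrum {𝕜 A : Type*} [NormedField 𝕜] [NormedRing A]
    [NormedAlgebra 𝕜 A] [CompleteSpace A] (z : 𝕜) : IsOpen {a : A | z ∉ spectrum 𝕜 a} := by
  simp_rw [spectrum.notMem_iff]
  exact Units.isOpen.preimage (continuous_const.sub continuous_id)

namespace lp

section

variable {ι E : Type*} [NormedAddCommGroup E]

theorem sum_norm_sq_le (x : ℓ²(ι, E)) (s : Finset ι) : ∑ i ∈ s, ‖x i‖ ^ 2 ≤ ‖x‖ ^ 2 := by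
  simpa using lp.sum_rpow_le_norm_rpow (p := 2) (by norm_num) x s

theorem norm_le_of_forall_sum_sq_le {x : ℓ²(ι, E)} {C : ℝ} (hC : 0 ≤ C)
    (h : ∀ s : Finset ι, ∑ i ∈ s, ‖x i‖ ^ 2 ≤ C ^ 2) : ‖x‖ ≤ C :=
  lp.norm_le_of_forall_sum_le (p := 2) (by norm_num) hC (by simpa using h)

end

variable {𝕜 : Type*} [RCLike 𝕜]

theorem inner_single_one_left {ι : Type*} [DecidableEq ι] (i : ι) (x : ℓ²(ι, 𝕜)) :
    ⟪lp.single 2 i (1 : 𝕜), x⟫_𝕜 = x i := by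
  simp [lp.inner_single_left]

theorem apply_eq_sum_of_banded (F : ℓ²(ℤ, 𝕜) →L[𝕜] ℓ²(ℤ, 𝕜)) {w : ℕ}
    (hF : ∀ m k : ℤ, k ∉ Finset.Icc (m - w) (m + w) → F (lp.single 2 k 1) m = 0)
    (x : ℓ²(ℤ, 𝕜)) (m : ℤ) :
    F x m = ∑ j ∈ Finset.Icc (-(w : ℤ)) w, F (lp.single 2 (m + j) 1) m * x (m + j) := by
  have hx : HasSum (fun k => F (lp.single 2 k 1) m * x k) (F x m) := by
    have := (lp.evalCLM 𝕜 (fun _ : ℤ => 𝕜) 2 m).hasSum (F.hasSum (lp.hasSum_single (by simp) x))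
    refine this.congr_fun fun k => ?_
    have hk : lp.single 2 k (x k) = x k • lp.single (E := fun _ : ℤ => 𝕜) 2 k 1 := by
      rw [← lp.single_smul, smul_eq_mul, mul_one]
    simp [hk, lp.evalCLM, mul_comm]
  have hsupp : ∀ k ∉ (Finset.Icc (-(w : ℤ)) w).map (addLeftEmbedding m),
      F (lp.single 2 k 1) m * x k = 0 := fun k hk => by
    rw [Finset.map_add_left_Icc, ← sub_eq_add_neg] at hk
    rw [hF m k hk, zero_mul]
  simpa only [Finset.sum_map, addLeftEmbedding_apply] using
    hx.unique (hasSum_sum_of_ne_finset_zero hsupp)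

theorem norm_apply_sq_le_of_banded (F : ℓ²(ℤ, 𝕜) →L[𝕜] ℓ²(ℤ, 𝕜)) {w : ℕ} {s : ℝ}
    (hF : ∀ m k : ℤ, k ∉ Finset.Icc (m - w) (m + w) → F (lp.single 2 k 1) m = 0)
    (hs : ∀ m k, ‖F (lp.single 2 k 1) m‖ ≤ s) (x : ℓ²(ℤ, 𝕜)) (m : ℤ) :
    ‖F x m‖ ^ 2 ≤ (2 * w + 1) * s ^ 2 * ∑ j ∈ Finset.Icc (-(w : ℤ)) w, ‖x (m + j)‖ ^ 2 := by
  have hcard : ((Finset.Icc (-(w : ℤ)) w).card : ℝ) = 2 * w + 1 := by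
    exact_mod_cast Int.card_Icc_neg_self w
  calc ‖F x m‖ ^ 2
      ≤ (∑ j ∈ Finset.Icc (-(w : ℤ)) w, s * ‖x (m + j)‖) ^ 2 := by
        rw [apply_eq_sum_of_banded F hF]
        gcongr
        refine (norm_sum_le _ _).trans (Finset.sum_le_sum fun j _ => ?_)
        rw [norm_mul]
        exact mul_le_mul_of_nonneg_right (hs _ _) (norm_nonneg _)
    _ ≤ (2 * w + 1) * ∑ j ∈ Finset.Icc (-(w : ℤ)) w, (s * ‖x (m + j)‖) ^ 2 :=
        hcard ▸ sq_sum_le_card_mul_sum_sq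
    _ = (2 * w + 1) * s ^ 2 * ∑ j ∈ Finset.Icc (-(w : ℤ)) w, ‖x (m + j)‖ ^ 2 := by
        simp only [mul_pow, ← Finset.mul_sum]; ring

theorem norm_le_of_banded (F : ℓ²(ℤ, 𝕜) →L[𝕜] ℓ²(ℤ, 𝕜)) {w : ℕ} {s : ℝ} (hs₀ : 0 ≤ s)
    (hF : ∀ m k : ℤ, k ∉ Finset.Icc (m - w) (m + w) → F (lp.single 2 k 1) m = 0)
    (hs : ∀ m k, ‖F (lp.single 2 k 1) m‖ ≤ s) : ‖F‖ ≤ (2 * w + 1) * s := by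
  refine F.opNorm_le_bound (by positivity) fun x =>
    norm_le_of_forall_sum_sq_le (by positivity) fun t => ?_
  have hshift : ∀ j, ∑ m ∈ t, ‖x (m + j)‖ ^ 2 ≤ ‖x‖ ^ 2 := fun j => by
    simpa using sum_norm_sq_le x (t.map (addRightEmbedding j))
  calc ∑ m ∈ t, ‖F x m‖ ^ 2
      ≤ ∑ m ∈ t, (2 * w + 1) * s ^ 2 * ∑ j ∈ Finset.Icc (-(w : ℤ)) w, ‖x (m + j)‖ ^ 2 :=
        Finset.sum_le_sum fun m _ => norm_apply_sq_le_of_banded F hF hs x m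
    _ = (2 * w + 1) * s ^ 2 * ∑ j ∈ Finset.Icc (-(w : ℤ)) w, ∑ m ∈ t, ‖x (m + j)‖ ^ 2 := by
        rw [← Finset.mul_sum, Finset.sum_comm]
    _ ≤ (2 * w + 1) * s ^ 2 * ∑ j ∈ Finset.Icc (-(w : ℤ)) w, ‖x‖ ^ 2 := by
        gcongr with j; exact hshift j
    _ = ((2 * w + 1) * s * ‖x‖) ^ 2 := by
        rw [Finset.sum_const, Int.card_Icc_neg_self, nsmul_eq_mul]
        push_cast; ring

end lp

theorem norm_cmvRho_le (α : ℤ → ℂ) (n : ℤ) : ‖cmvRho α n‖ ≤ 1 := by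
  rw [cmvRho, Complex.norm_real, Real.norm_of_nonneg (Real.sqrt_nonneg _)]
  exact Real.sqrt_le_one.2 (by nlinarith [norm_nonneg (α n)])

theorem norm_cmvRho_sub_le {α β : ℤ → ℂ} {n : ℤ} (hα : ‖α n‖ ≤ 1) (hβ : ‖β n‖ ≤ 1) :
    ‖cmvRho α n - cmvRho β n‖ ≤ √(2 * ‖α n - β n‖) := by
  rw [cmvRho, cmvRho, ← Complex.ofReal_sub, Complex.norm_real, Real.norm_eq_abs]
  refine (Real.abs_sqrt_sub_sqrt_le (by nlinarith [norm_nonneg (α n)])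
    (by nlinarith [norm_nonneg (β n)])).trans (Real.sqrt_le_sqrt ?_)
  have hdiff : |‖β n‖ - ‖α n‖| ≤ ‖α n - β n‖ := by
    rw [abs_sub_comm]; exact abs_norm_sub_norm_le _ _
  calc |1 - ‖α n‖ ^ 2 - (1 - ‖β n‖ ^ 2)| = |‖β n‖ - ‖α n‖| * (‖β n‖ + ‖α n‖) := by
        rw [← abs_of_nonneg (by positivity : 0 ≤ ‖β n‖ + ‖α n‖), ← abs_mul]; ring_nf
    _ ≤ ‖α n - β n‖ * 2 := by gcongr; linarith
    _ = 2 * ‖α n - β n‖ := mul_comm _ _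

theorem cmvEntry_eq_zero_of_notMem (α : ℤ → ℂ) {m k : ℤ} (hk : k ∉ Finset.Icc (m - 2) (m + 2)) :
    cmvEntry α m k = 0 := by
  rw [Finset.mem_Icc] at hk
  unfold cmvEntry
  split_ifs <;> first | rfl | omega

theorem norm_cmvEntry_sub_le {α β : ℤ → ℂ} (hα : ∀ n, ‖α n‖ ≤ 1) (hβ : ∀ n, ‖β n‖ ≤ 1) {e : ℝ}
    (hd : ∀ n, ‖α n - β n‖ ≤ e) (hρ : ∀ n, ‖cmvRho α n - cmvRho β n‖ ≤ e) (m k : ℤ) :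
    ‖cmvEntry α m k - cmvEntry β m k‖ ≤ 2 * e := by
  have he : 0 ≤ e := (norm_nonneg _).trans (hd 0)
  have hd' : ∀ n, ‖(starRingEnd ℂ) (α n) - (starRingEnd ℂ) (β n)‖ ≤ e := fun n => by
    rw [← map_sub, Complex.norm_conj]; exact hd n
  have hneg : ∀ u v : ℂ, ‖u - v‖ ≤ e → ‖-u - -v‖ ≤ e := fun u v h => by
    rwa [neg_sub_neg, norm_sub_rev]
  unfold cmvEntry
  split_ifs <;>
  first
  | simp only [sub_self, norm_zero]; positivity
  | refine (norm_mul_sub_mul_le ?_ ?_).trans ?_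
    · simp only [norm_neg, Complex.norm_conj, hα, norm_cmvRho_le]
    · first | exact hβ _ | exact norm_cmvRho_le β _
    · rw [two_mul]
      gcongr
      all_goals first
        | exact hd _ | exact hd' _ | exact hρ _ | exact hneg _ _ (hd' _) | exact hneg _ _ (hρ _)

theorem norm_sub_le_of_cmvEntry {α β : ℤ → ℂ} (hα : ∀ n, ‖α n‖ ≤ 1) (hβ : ∀ n, ‖β n‖ ≤ 1)
    {d : ℝ} (hd : ∀ n, ‖α n - β n‖ ≤ d) {F G : ℓ²(ℤ, ℂ) →L[ℂ] ℓ²(ℤ, ℂ)}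
    (hF : ∀ m k, F (lp.single 2 k 1) m = cmvEntry α m k)
    (hG : ∀ m k, G (lp.single 2 k 1) m = cmvEntry β m k) :
    ‖F - G‖ ≤ 10 * (d + √(2 * d)) := by
  have hd₀ : 0 ≤ d := (norm_nonneg _).trans (hd 0)
  have hα' : ∀ n, ‖α n - β n‖ ≤ d + √(2 * d) := fun n =>
    (hd n).trans (le_add_of_nonneg_right (Real.sqrt_nonneg _))
  have hρ : ∀ n, ‖cmvRho α n - cmvRho β n‖ ≤ d + √(2 * d) := fun n =>
    (norm_cmvRho_sub_le (hα n) (hβ n)).trans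
      (le_add_of_nonneg_of_le hd₀ (Real.sqrt_le_sqrt (by linarith [hd n])))
  have hentry : ∀ m k, (F - G) (lp.single 2 k 1) m = cmvEntry α m k - cmvEntry β m k := by
    simp [hF, hG]
  have := lp.norm_le_of_banded (F - G) (w := 2) (by positivity)
    (fun m k hk => by
      rw [hentry, cmvEntry_eq_zero_of_notMem _ hk, cmvEntry_eq_zero_of_notMem _ hk, sub_zero])
    (fun m k => (hentry m k).symm ▸ norm_cmvEntry_sub_le hα hβ hα' hρ m k)
  exact this.trans_eq (by push_cast; ring)

theorem continuous_of_cmvEntry {X : Type*} [PseudoMetricSpace X] {α : X → ℤ → ℂ}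
    (hα : ∀ x n, ‖α x n‖ ≤ 1) (hαd : ∀ x y n, ‖α x n - α y n‖ ≤ dist x y)
    {E : X → ℓ²(ℤ, ℂ) →L[ℂ] ℓ²(ℤ, ℂ)}
    (hE : ∀ x m k, ⟪lp.single 2 m (1 : ℂ), E x (lp.single 2 k 1)⟫_ℂ = cmvEntry (α x) m k) :
    Continuous E := by
  simp only [lp.inner_single_one_left] at hE
  refine continuous_iff_continuousAt.2 fun x => tendsto_iff_norm_sub_tendsto_zero.2 ?_
  have hbound : Tendsto (fun y => 10 * (dist y x + √(2 * dist y x))) (𝓝 x) (𝓝 0) := by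
    have : Continuous fun t : ℝ => 10 * (t + √(2 * t)) := by fun_prop
    have hdist : Tendsto (fun y => dist y x) (𝓝 x) (𝓝 0) := by
      simpa using (continuous_id.dist (continuous_const (y := x))).tendsto x
    simpa [Function.comp_def] using (this.tendsto 0).comp hdist
  exact squeeze_zero (fun _ => norm_nonneg _)
    (fun y => norm_sub_le_of_cmvEntry (hα y) (hα x) (hαd y x) (hE y) (hE x)) hbound

theorem cantor_spectrum_Gdelta_general
    {Ω : Type*} [TopologicalSpace Ω] [CompactSpace Ω] [AddCommGroup Ω]
    (a : Ω)
    (ω : Ω)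
    (E : {f : C(Ω, ℂ) // ∀ x, ‖f x‖ < 1} →
      (lp (fun _ : ℤ => ℂ) 2 →L[ℂ] lp (fun _ : ℤ => ℂ) 2))
    (hE : ∀ f, ∀ m k : ℤ,
      ⟪lp.single 2 m (1 : ℂ), E f (lp.single 2 k 1)⟫_ℂ =
        cmvEntry (fun n => (f : C(Ω, ℂ)) (ω + n • a)) m k) :
    IsGδ {f : {f : C(Ω, ℂ) // ∀ x, ‖f x‖ < 1} |
      interior ((fun z : Metric.sphere (0 : ℂ) 1 => (z : ℂ)) ⁻¹' spectrum ℂ (E f)) = ∅} := by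
  have hE_cont : Continuous E :=
    continuous_of_cmvEntry (fun f n => (f.2 _).le)
      (fun f g n => by rw [← dist_eq_norm]; exact ContinuousMap.dist_apply_le_dist _) hE
  exact isGδ_setOf_interior_eq_empty fun z =>
    (isOpen_setOf_notMem_spectrum (z : ℂ)).preimage hE_cont

/-- Let `Ω` be a Cantor group (totally disconnected compact abelian topological group
without isolated points) and `T : ω ↦ ω + a` a minimal translation.  For each sampling
function `f` in `C(Ω, 𝔻)` (realized as the subtype of `C(Ω, ℂ)` of maps into the open
unit disk), let `E f` be the extended CMV operator on `ℓ²(ℤ)` with Verblunsky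
coefficients `αₙ = f(Tⁿω)`.  Then
`ℛ = {f : Σ(E f) has empty interior in ∂𝔻}` is a `G_δ` subset of `C(Ω, 𝔻)`. -/
theorem cantor_spectrum_Gdelta
    {Ω : Type*} [TopologicalSpace Ω] [CompactSpace Ω] [AddCommGroup Ω]
    [IsTopologicalAddGroup Ω] [TotallyDisconnectedSpace Ω]
    (hperf : ∀ x : Ω, ¬IsOpen ({x} : Set Ω))
    (a : Ω) (hmin : ∀ ω : Ω, Dense (Set.range fun n : ℤ => ω + n • a))
    (ω : Ω)
    (E : {f : C(Ω, ℂ) // ∀ x, ‖f x‖ < 1} →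
      (lp (fun _ : ℤ => ℂ) 2 →L[ℂ] lp (fun _ : ℤ => ℂ) 2))
    (hE : ∀ f, ∀ m k : ℤ,
      ⟪lp.single 2 m (1 : ℂ), E f (lp.single 2 k 1)⟫_ℂ =
        cmvEntry (fun n => (f : C(Ω, ℂ)) (ω + n • a)) m k)
    (hEunitary : ∀ f, E f ∈ unitary (lp (fun _ : ℤ => ℂ) 2 →L[ℂ] lp (fun _ : ℤ => ℂ) 2)) :
    IsGδ {f : {f : C(Ω, ℂ) // ∀ x, ‖f x‖ < 1} |
      interior ((fun z : Metric.sphere (0 : ℂ) 1 => (z : ℂ)) ⁻¹' spectrum ℂ (E f)) = ∅} :=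
  cantor_spectrum_Gdelta_general a ω E hE
end

section
/- Let ψ : [θ₀, θ₁] → [0, π] be continuously differentiable and monotone with |Δ'(e^{iθ})| ≤ M on the band, where dψ/dθ = Δ'(e^{iθ})/(2 sin ψ) holds wherever sin ψ ≠ 0. Then for every t ∈ (1,2) there is a constant D = D(M, q, t) such that ∫ |（1/(qπ)) dψ/dθ|^t dθ ≤ D, where the integral is over the union of the bands. -/
/-!
A monotone `ψ` sits at `0` on an initial segment of the band and at `π` on a final one, where
`ψ' = 0`; in between `0 < ψ < π`. There `sin ψ ≥ (2/π) min(ψ, π - ψ)` and `|ψ'| · 2 sin ψ ≤ M`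
give `ψ'^t = ψ'^(t-1) ψ' ≤ (Mπ/4)^(t-1) (ψ^(1-t) + (π - ψ)^(1-t)) ψ'`, whose right-hand side
is the derivative of `(Mπ/4)^(t-1) (ψ^(2-t) - (π - ψ)^(2-t)) / (2 - t)`, a function bounded
by `(Mπ/4)^(t-1) π^(2-t) / (2 - t)` in absolute value because `t < 2`. An antitone `ψ` is
replaced by `π - ψ`.
-/

open Set MeasureTheory Real

lemma MonotoneOn.exists_flat_ends {ψ : ℝ → ℝ} {a b lo hi : ℝ} (hab : a ≤ b) (hlohi : lo < hi)
    (hψ : MonotoneOn ψ (Icc a b)) (hrange : MapsTo ψ (Icc a b) (Icc lo hi)) :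
    ∃ c d, a ≤ c ∧ c ≤ d ∧ d ≤ b ∧ EqOn ψ (fun _ => lo) (Ioo a c) ∧
      EqOn ψ (fun _ => hi) (Ioo d b) ∧ MapsTo ψ (Ioo c d) (Ioo lo hi) := by
  set S₀ := insert a {x ∈ Icc a b | ψ x = lo}
  set S₁ := insert b {x ∈ Icc a b | ψ x = hi}
  have hS₀ : S₀ ⊆ Icc a b := insert_subset ⟨le_rfl, hab⟩ (sep_subset _ _)
  have hS₁ : S₁ ⊆ Icc a b := insert_subset ⟨hab, le_rfl⟩ (sep_subset _ _)
  have hS₀bdd : BddAbove S₀ := bddAbove_Icc.mono hS₀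
  have hS₁bdd : BddBelow S₁ := bddBelow_Icc.mono hS₁
  have hac : a ≤ sSup S₀ := le_csSup hS₀bdd (mem_insert _ _)
  have hcb : sSup S₀ ≤ b := csSup_le (insert_nonempty _ _) fun y hy => (hS₀ hy).2
  have had : a ≤ sInf S₁ := le_csInf (insert_nonempty _ _) fun y hy => (hS₁ hy).1
  have hdb : sInf S₁ ≤ b := csInf_le hS₁bdd (mem_insert _ _)
  have hlo : EqOn ψ (fun _ => lo) (Ioo a (sSup S₀)) := by
    intro x hx
    obtain ⟨y, hyS, hxy⟩ := exists_lt_of_lt_csSup (insert_nonempty _ _) hx.2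
    obtain rfl | ⟨hy, hψy⟩ := hyS
    · exact absurd hx.1 hxy.not_gt
    have hxI : x ∈ Icc a b := ⟨hx.1.le, hxy.le.trans hy.2⟩
    exact le_antisymm (hψy ▸ hψ hxI hy hxy.le) (hrange hxI).1
  have hhi : EqOn ψ (fun _ => hi) (Ioo (sInf S₁) b) := by
    intro x hx
    obtain ⟨y, hyS, hyx⟩ := exists_lt_of_csInf_lt (insert_nonempty _ _) hx.1
    obtain rfl | ⟨hy, hψy⟩ := hyS
    · exact absurd hx.2 hyx.not_gt
    have hxI : x ∈ Icc a b := ⟨hy.1.trans hyx.le, hx.2.le⟩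
    exact le_antisymm (hrange hxI).2 (hψy ▸ hψ hy hxI hyx.le)
  have hcd : sSup S₀ ≤ sInf S₁ := by
    by_contra! h
    obtain ⟨x, hdx, hxc⟩ := exists_between h
    exact hlohi.ne ((hlo ⟨had.trans_lt hdx, hxc⟩).symm.trans (hhi ⟨hdx, hxc.trans_le hcb⟩))
  refine ⟨sSup S₀, sInf S₁, hac, hcd, hdb, hlo, hhi, fun x hx => ?_⟩
  have hxI : x ∈ Icc a b := ⟨hac.trans hx.1.le, hx.2.le.trans hdb⟩
  refine ⟨(hrange hxI).1.lt_of_ne fun h => hx.1.not_ge ?_,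
    (hrange hxI).2.lt_of_ne fun h => hx.2.not_ge ?_⟩
  · exact le_csSup hS₀bdd (mem_insert_of_mem _ ⟨hxI, h.symm⟩)
  · exact csInf_le hS₁bdd (mem_insert_of_mem _ ⟨hxI, h⟩)

lemma intervalIntegral_comp_deriv_eq_zero_of_eqOn {f F : ℝ → ℝ} {a c k : ℝ} (hac : a ≤ c)
    (hf : EqOn f (fun _ => k) (Ioo a c)) (hF : F 0 = 0) : ∫ x in a..c, F (deriv f x) = 0 := by
  refine intervalIntegral.integral_zero_ae ?_
  filter_upwards [Measure.ae_ne volume c] with x hxc hx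
  rw [uIoc_of_le hac] at hx
  have hx' : x ∈ Ioo a c := ⟨hx.1, hx.2.lt_of_ne hxc⟩
  have : f =ᶠ[nhds x] fun _ => k := Filter.eventuallyEq_of_mem (Ioo_mem_nhds hx'.1 hx'.2) hf
  rw [this.deriv_eq, deriv_const, hF]

lemma ContDiffOn.integrableOn_comp_deriv {f F : ℝ → ℝ} {a b : ℝ}
    (hf : ContDiffOn ℝ 1 f (Icc a b)) (hF : Continuous F) :
    IntegrableOn (fun x => F (deriv f x)) (Icc a b) := by
  rw [integrableOn_Icc_iff_integrableOn_Ioo]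
  rcases le_or_gt b a with hba | hab
  · simp [Ioo_eq_empty_of_le hba]
  have hcont : ContinuousOn (fun x => F (derivWithin f (Icc a b) x)) (Icc a b) :=
    hF.comp_continuousOn (hf.continuousOn_derivWithin (uniqueDiffOn_Icc hab) le_rfl)
  refine (hcont.integrableOn_Icc.mono_set Ioo_subset_Icc_self).congr_fun (fun x hx => ?_)
    measurableSet_Ioo
  simp only [derivWithin_of_mem_nhds (Icc_mem_nhds hx.1 hx.2)]

lemma intervalIntegral_comp_deriv_eq_of_flat_ends {f F : ℝ → ℝ} {a b c d k l : ℝ} (hac : a ≤ c)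
    (hcd : c ≤ d) (hdb : d ≤ b) (hint : IntegrableOn (fun x => F (deriv f x)) (Icc a b))
    (hF : F 0 = 0) (hk : EqOn f (fun _ => k) (Ioo a c)) (hl : EqOn f (fun _ => l) (Ioo d b)) :
    ∫ x in a..b, F (deriv f x) = ∫ x in c..d, F (deriv f x) := by
  have hII : ∀ u ∈ Icc a b, ∀ v ∈ Icc a b, IntervalIntegrable (fun x => F (deriv f x)) volume u v :=
    fun u hu v hv => (hint.mono_set (uIcc_subset_Icc hu hv)).intervalIntegrable
  have ha : a ∈ Icc a b := ⟨le_rfl, hac.trans (hcd.trans hdb)⟩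
  have hb : b ∈ Icc a b := ⟨hac.trans (hcd.trans hdb), le_rfl⟩
  have hc : c ∈ Icc a b := ⟨hac, hcd.trans hdb⟩
  have hd : d ∈ Icc a b := ⟨hac.trans hcd, hdb⟩
  rw [← intervalIntegral.integral_add_adjacent_intervals (hII a ha c hc) (hII c hc b hb),
    ← intervalIntegral.integral_add_adjacent_intervals (hII c hc d hd) (hII d hd b hb),
    intervalIntegral_comp_deriv_eq_zero_of_eqOn hac hk hF,
    intervalIntegral_comp_deriv_eq_zero_of_eqOn hdb hl hF, zero_add, add_zero]

lemma two_div_pi_mul_min_le_sin {s : ℝ} (hs : s ∈ Icc 0 π) : 2 / π * min s (π - s) ≤ sin s := by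
  rcases le_total s (π / 2) with h | h
  · exact (mul_le_mul_of_nonneg_left (min_le_left _ _) (by positivity)).trans
      (mul_le_sin hs.1 h)
  · rw [← sin_pi_sub]
    exact (mul_le_mul_of_nonneg_left (min_le_right _ _) (by positivity)).trans
      (mul_le_sin (by linarith [hs.2]) (by linarith))

lemma rpow_le_of_mul_two_mul_sin_le {M t s d : ℝ} (ht : 1 < t) (hs : s ∈ Ioo 0 π) (hd : 0 ≤ d)
    (h : d * (2 * sin s) ≤ M) :
    d ^ t ≤ (M * π / 4) ^ (t - 1) * (s ^ (1 - t) + (π - s) ^ (1 - t)) * d := by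
  set m := min s (π - s) with hm_def
  have hm : 0 < m := lt_min hs.1 (sub_pos.2 hs.2)
  have hdm : d * m ≤ M * π / 4 := by
    rw [le_div_iff₀ (by norm_num : (0 : ℝ) < 4)]
    calc d * m * 4 = π * (2 * (d * (2 / π * m))) := by field_simp; ring
      _ ≤ π * (2 * (d * sin s)) := by
          gcongr; exact two_div_pi_mul_min_le_sin (Ioo_subset_Icc_self hs)
      _ = π * (d * (2 * sin s)) := by ring
      _ ≤ M * π := by rw [mul_comm M]; gcongr
  have hm_le : m ^ (1 - t) ≤ s ^ (1 - t) + (π - s) ^ (1 - t) := by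
    have h₁ := rpow_nonneg hs.1.le (1 - t)
    have h₂ := rpow_nonneg (sub_pos.2 hs.2).le (1 - t)
    rcases min_choice s (π - s) with h | h <;> rw [hm_def, h] <;> linarith
  calc d ^ t = d ^ (t - 1) * d := by rw [← rpow_add_one' hd (by linarith), sub_add_cancel]
    _ = (d * m) ^ (t - 1) * m ^ (1 - t) * d := by
        rw [mul_rpow hd hm.le, mul_assoc (d ^ (t - 1)), ← rpow_add hm]; simp
    _ ≤ (M * π / 4) ^ (t - 1) * (s ^ (1 - t) + (π - s) ^ (1 - t)) * d := by
        have := rpow_nonneg ((mul_nonneg hd hm.le).trans hdm) (t - 1)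
        gcongr

lemma hasDerivAt_rpow_sub_rpow_sub_div {L p u : ℝ} (hp : p ≠ 0) (hu : u ∈ Ioo 0 L) :
    HasDerivAt (fun u => (u ^ p - (L - u) ^ p) / p) (u ^ (p - 1) + (L - u) ^ (p - 1)) u := by
  have h₁ := (hasDerivAt_id u).rpow_const (p := p) (Or.inl hu.1.ne')
  have h₂ := ((hasDerivAt_id u).const_sub L).rpow_const (p := p) (Or.inl (sub_pos.2 hu.2).ne')
  refine ((h₁.sub h₂).div_const p).congr_deriv ?_
  field_simp
  simp

lemma rpow_sub_rpow_sub_div_sub_le {L p u v : ℝ} (hp : 0 < p) (hu : u ∈ Icc 0 L)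
    (hv : v ∈ Icc 0 L) :
    (v ^ p - (L - v) ^ p) / p - (u ^ p - (L - u) ^ p) / p ≤ 2 * L ^ p / p := by
  rw [← sub_div, div_le_div_iff_of_pos_right hp]
  have h₁ : v ^ p ≤ L ^ p := rpow_le_rpow hv.1 hv.2 hp.le
  have h₂ : (L - u) ^ p ≤ L ^ p := rpow_le_rpow (by linarith [hu.2]) (by linarith [hu.1]) hp.le
  have h₃ := rpow_nonneg (sub_nonneg.2 hv.2) p
  have h₄ := rpow_nonneg hu.1 p
  linarith

noncomputable def bandIntegralBound (M t : ℝ) : ℝ :=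
  (M * π / 4) ^ (t - 1) * (2 * π ^ (2 - t) / (2 - t))

theorem MonotoneOn.integral_abs_deriv_rpow_le {M t a b : ℝ} {ψ : ℝ → ℝ} (hM : 0 ≤ M)
    (ht1 : 1 < t) (ht2 : t < 2) (hab : a ≤ b) (hC : ContDiffOn ℝ 1 ψ (Icc a b))
    (hψ : MonotoneOn ψ (Icc a b)) (hrange : MapsTo ψ (Icc a b) (Icc 0 π))
    (hQ : ∀ x ∈ Icc a b, |deriv ψ x| * (2 * sin (ψ x)) ≤ M) :
    ∫ x in a..b, |deriv ψ x| ^ t ≤ bandIntegralBound M t := by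
  obtain ⟨c, d, hac, hcd, hdb, hlo, hhi, hmid⟩ := hψ.exists_flat_ends hab pi_pos hrange
  set h : ℝ → ℝ := fun u => (u ^ (2 - t) - (π - u) ^ (2 - t)) / (2 - t)
  set K := (M * π / 4) ^ (t - 1)
  have hcdab : Icc c d ⊆ Icc a b := Icc_subset_Icc hac hdb
  have hint : IntegrableOn (fun x => |deriv ψ x| ^ t) (Icc a b) :=
    hC.integrableOn_comp_deriv (continuous_abs.rpow_const fun _ => Or.inr (by linarith))
  -- `h ∘ ψ` need not be differentiable where `ψ` reaches `0` or `π`, so the fundamental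
  -- theorem of calculus is only applied on `[c, d]`.
  have hsplit : ∫ x in a..b, |deriv ψ x| ^ t = ∫ x in c..d, |deriv ψ x| ^ t :=
    intervalIntegral_comp_deriv_eq_of_flat_ends (F := fun y => |y| ^ t) hac hcd hdb hint
      (by simp [zero_rpow (by linarith : t ≠ 0)]) hlo hhi
  have hderiv : ∀ x ∈ Ioo c d, HasDerivAt ψ (deriv ψ x) x ∧ 0 ≤ deriv ψ x := by
    intro x hx
    have hnhds : Icc a b ∈ nhds x := Icc_mem_nhds (hac.trans_lt hx.1) (hx.2.trans_le hdb)
    refine ⟨((hC.differentiableOn one_ne_zero x (mem_of_mem_nhds hnhds)).differentiableAt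
      hnhds).hasDerivAt, ?_⟩
    rw [← derivWithin_of_mem_nhds hnhds]
    exact hψ.derivWithin_nonneg
  have hhcont : Continuous h :=
    ((continuous_id.rpow_const fun _ => Or.inr (by linarith)).sub
      ((continuous_const.sub continuous_id).rpow_const fun _ => Or.inr (by linarith))).div_const _
  calc ∫ x in a..b, |deriv ψ x| ^ t = ∫ x in c..d, |deriv ψ x| ^ t := hsplit
    _ ≤ K * h (ψ d) - K * h (ψ c) := by
        refine intervalIntegral.integral_le_sub_of_hasDeriv_right_of_le
          (φ := fun x => |deriv ψ x| ^ t)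
          (g' := fun x => K * ((ψ x ^ (1 - t) + (π - ψ x) ^ (1 - t)) * deriv ψ x)) hcd
          (continuousOn_const.mul (hhcont.comp_continuousOn (hC.continuousOn.mono hcdab)))
          (fun x hx => ?_) (hint.mono_set hcdab) (fun x hx => ?_)
        · have := (hasDerivAt_rpow_sub_rpow_sub_div (L := π) (p := 2 - t) (by linarith)
            (hmid hx)).comp x (hderiv x hx).1
          rw [show (2 : ℝ) - t - 1 = 1 - t by ring] at this
          exact (this.const_mul K).hasDerivWithinAt
        · have hd := (hderiv x hx).2
          have hQx := hQ x ⟨hac.trans hx.1.le, hx.2.le.trans hdb⟩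
          rw [abs_of_nonneg hd] at hQx ⊢
          rw [← mul_assoc]
          exact rpow_le_of_mul_two_mul_sin_le ht1 (hmid hx) hd hQx
    _ ≤ bandIntegralBound M t := by
        rw [← mul_sub]
        exact mul_le_mul_of_nonneg_left (rpow_sub_rpow_sub_div_sub_le (by linarith)
          (hrange ⟨hac, hcd.trans hdb⟩) (hrange ⟨hac.trans hcd, hdb⟩))
          (rpow_nonneg (by positivity) _)

theorem integral_abs_deriv_rpow_le {M t a b : ℝ} {ψ : ℝ → ℝ} (hM : 0 ≤ M)
    (ht1 : 1 < t) (ht2 : t < 2) (hab : a ≤ b) (hC : ContDiffOn ℝ 1 ψ (Icc a b))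
    (hψ : MonotoneOn ψ (Icc a b) ∨ AntitoneOn ψ (Icc a b))
    (hrange : MapsTo ψ (Icc a b) (Icc 0 π))
    (hQ : ∀ x ∈ Icc a b, |deriv ψ x| * (2 * sin (ψ x)) ≤ M) :
    ∫ x in a..b, |deriv ψ x| ^ t ≤ bandIntegralBound M t := by
  rcases hψ with hψ | hψ
  · exact hψ.integral_abs_deriv_rpow_le hM ht1 ht2 hab hC hrange hQ
  have h := MonotoneOn.integral_abs_deriv_rpow_le (ψ := fun x => π - ψ x) hM ht1 ht2 hab
    (contDiffOn_const.sub hC) (fun x hx y hy hxy => sub_le_sub_left (hψ hx hy hxy) π)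
    (fun x hx => ⟨sub_nonneg.2 (hrange hx).2, sub_le_self _ (hrange hx).1⟩)
    (by simpa only [deriv_const_sub, abs_neg, sin_pi_sub] using hQ)
  simpa only [deriv_const_sub, abs_neg] using h

theorem density_of_states_Lt_bound_general
    (M : ℝ) (hM : 0 ≤ M) (q : ℕ) (t : ℝ) (ht1 : 1 < t) (ht2 : t < 2) :
    ∃ D : ℝ, ∀ (a b : Fin q → ℝ) (ψ : Fin q → ℝ → ℝ),
      (∀ i, a i ≤ b i) →
      (∀ i, ContDiffOn ℝ 1 (ψ i) (Icc (a i) (b i))) →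
      (∀ i, MonotoneOn (ψ i) (Icc (a i) (b i)) ∨ AntitoneOn (ψ i) (Icc (a i) (b i))) →
      (∀ i, ∀ x ∈ Icc (a i) (b i), ψ i x ∈ Icc 0 Real.pi) →
      (∀ i, ∀ x ∈ Icc (a i) (b i), |deriv (ψ i) x| * (2 * Real.sin (ψ i x)) ≤ M) →
      ∑ i, ∫ x in (a i)..(b i), |deriv (ψ i) x / (q * Real.pi)| ^ t ≤ D := by
  refine ⟨q * (bandIntegralBound M t / (q * π) ^ t), fun a b ψ hab hC hψ hrange hQ => ?_⟩
  have hqπ : 0 ≤ (q : ℝ) * π := by positivity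
  calc ∑ i, ∫ x in (a i)..(b i), |deriv (ψ i) x / (q * π)| ^ t
      = ∑ i, (∫ x in (a i)..(b i), |deriv (ψ i) x| ^ t) / (q * π) ^ t := by
        simp only [abs_div, abs_of_nonneg hqπ, div_rpow (abs_nonneg _) hqπ,
          intervalIntegral.integral_div]
    _ ≤ ∑ _i : Fin q, bandIntegralBound M t / (q * π) ^ t :=
        Finset.sum_le_sum fun i _ => div_le_div_of_nonneg_right
          (integral_abs_deriv_rpow_le hM ht1 ht2 (hab i) (hC i) (hψ i) (hrange i) (hQ i))
          (rpow_nonneg hqπ t)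
    _ = q * (bandIntegralBound M t / (q * π) ^ t) := by simp

/-- Integrability of the density of states (Lemma 3.1): let the `q` bands be intervals
`[aᵢ, bᵢ]` carrying `C¹` monotone functions `ψᵢ` with values in `[0, π]` satisfying
`|ψᵢ'(θ)| · 2 sin(ψᵢ(θ)) ≤ M` (i.e. `|Δ'| ≤ M` in `ψ' = Δ'/(2 sin ψ)`).  Then for
every `t ∈ (1,2)` there is a constant `D = D(M,q,t)` bounding
`∫ |(1/(qπ)) ψ'|^t dθ` over the union of the bands. -/
theorem density_of_states_Lt_bound
    (M : ℝ) (hM : 0 ≤ M) (q : ℕ) (hq : 0 < q) (t : ℝ) (ht1 : 1 < t) (ht2 : t < 2) :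
    ∃ D : ℝ, ∀ (a b : Fin q → ℝ) (ψ : Fin q → ℝ → ℝ),
      (∀ i, a i ≤ b i) →
      (∀ i, ContDiffOn ℝ 1 (ψ i) (Icc (a i) (b i))) →
      (∀ i, MonotoneOn (ψ i) (Icc (a i) (b i)) ∨ AntitoneOn (ψ i) (Icc (a i) (b i))) →
      (∀ i, ∀ x ∈ Icc (a i) (b i), ψ i x ∈ Icc 0 Real.pi) →
      (∀ i, ∀ x ∈ Icc (a i) (b i), |deriv (ψ i) x| * (2 * Real.sin (ψ i x)) ≤ M) →
      ∑ i, ∫ x in (a i)..(b i), |deriv (ψ i) x / (q * Real.pi)| ^ t ≤ D :=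
  density_of_states_Lt_bound_general M hM q t ht1 ht2
end
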